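/- Two-sided bound from the max characterization: for two solutions of the system and every l and every x ∈ V, one has -max_{x' : v^l(x') ≤ u^l(x')}(v̂^l(x') - û^l(x')) ≤ û^l(x) - v̂^l(x) ≤ max_{x' : u^l(x') ≤ v^l(x')}(û^l(x') - v̂^l(x')). -/
import Mathlib

open Finset

noncomputable def nbrAvg {V : Type*} [Fintype V] (G : SimpleGraph V) [DecidableRel G.Adj]
    (u : V → ℝ) (x : V) : ℝ :=
  (∑ y ∈ G.neighborFinset x, u y) / (G.degree x)

def hatFn {V : Type*} {m : ℕ} (u : Fin m → V → ℝ) (l : Fin m) (x : V) : ℝ :=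
  u l x - ∑ p ∈ Finset.univ.erase l, u p x

/-- `u` is a (nonnegative) solution of the discrete system with boundary set `Bd`,
nonlinearities `H`, `f`, and boundary data `φ`. -/
def IsSol {V : Type*} {m : ℕ} [Fintype V] (G : SimpleGraph V) [DecidableRel G.Adj]
    (Bd : Set V) (H : V → ℝ → ℝ) (f : Fin m → V → ℝ → ℝ) (φ : Fin m → V → ℝ)
    (u : Fin m → V → ℝ) : Prop :=
  (∀ l x, 0 ≤ u l x) ∧
  (∀ l x, x ∉ Bd → u l x =
      max (H x (nbrAvg G (u l) x - ∑ p ∈ Finset.univ.erase l, nbrAvg G (u p) x)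
           - f l x (u l x)) 0) ∧
  (∀ l x, x ∈ Bd → u l x = φ l x)

section Aux

variable {V : Type*} [Fintype V] (G : SimpleGraph V) [DecidableRel G.Adj]

lemma nbrAvg_sub (g h : V → ℝ) (x : V) :
    nbrAvg G (fun y => g y - h y) x = nbrAvg G g x - nbrAvg G h x := by
  unfold nbrAvg
  rw [Finset.sum_sub_distrib, sub_div]

lemma nbrAvg_add (g h : V → ℝ) (x : V) :
    nbrAvg G (fun y => g y + h y) x = nbrAvg G g x + nbrAvg G h x := by
  unfold nbrAvg
  rw [Finset.sum_add_distrib, add_div]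

lemma nbrAvg_neg (g : V → ℝ) (x : V) :
    nbrAvg G (fun y => -g y) x = -nbrAvg G g x := by
  unfold nbrAvg
  rw [Finset.sum_neg_distrib, neg_div]

lemma nbrAvg_nonpos {g : V → ℝ} (hg : ∀ y, g y ≤ 0) (x : V) :
    nbrAvg G g x ≤ 0 := by
  unfold nbrAvg
  apply div_nonpos_of_nonpos_of_nonneg
  · exact Finset.sum_nonpos fun y _ => hg y
  · positivity

lemma nbrAvg_mono {g h : V → ℝ} (hgh : ∀ y, g y ≤ h y) (x : V) :
    nbrAvg G g x ≤ nbrAvg G h x := by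
  have h1 : nbrAvg G (fun y => g y - h y) x ≤ 0 :=
    nbrAvg_nonpos G (fun y => sub_nonpos.2 (hgh y)) x
  rw [nbrAvg_sub] at h1
  linarith

lemma nbrAvg_hat {m : ℕ} (u : Fin m → V → ℝ) (l : Fin m) (x : V) :
    nbrAvg G (u l) x - ∑ p ∈ Finset.univ.erase l, nbrAvg G (u p) x
      = nbrAvg G (hatFn u l) x := by
  unfold nbrAvg hatFn
  rw [Finset.sum_sub_distrib, sub_div]
  congr 1
  rw [← Finset.sum_div]
  congr 1
  exact Finset.sum_comm

lemma hat_add_nonpos {m : ℕ} (u : Fin m → V → ℝ) (hnn : ∀ p x, 0 ≤ u p x)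
    {l q : Fin m} (hlq : q ≠ l) (y : V) : hatFn u l y + hatFn u q y ≤ 0 := by
  unfold hatFn
  have h1 : u q y ≤ ∑ p ∈ Finset.univ.erase l, u p y :=
    Finset.single_le_sum (fun p _ => hnn p y) (Finset.mem_erase.2 ⟨hlq, Finset.mem_univ q⟩)
  have h2 : u l y ≤ ∑ p ∈ Finset.univ.erase q, u p y :=
    Finset.single_le_sum (fun p _ => hnn p y) (Finset.mem_erase.2 ⟨hlq.symm, Finset.mem_univ l⟩)
  linarith

lemma sol_pos_interior {m : ℕ} {Bd : Set V} {H : V → ℝ → ℝ} {f : Fin m → V → ℝ → ℝ}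
    {φ : Fin m → V → ℝ} {u : Fin m → V → ℝ} (hu : IsSol G Bd H f φ u)
    (hHmono : ∀ x : V, Monotone (H x)) (hH0 : ∀ x, H x 0 = 0)
    (hfmono : ∀ l x, Monotone (f l x)) (hf0 : ∀ l x, f l x 0 = 0)
    {q : Fin m} {x : V} (hx : x ∉ Bd) (hpos : 0 < u q x) :
    u q x = H x (nbrAvg G (hatFn u q) x) - f q x (u q x) ∧
      0 < nbrAvg G (hatFn u q) x := by
  have heq := hu.2.1 q x hx
  rw [nbrAvg_hat] at heq
  have ht : 0 < H x (nbrAvg G (hatFn u q) x) - f q x (u q x) := by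
    by_contra hc
    push_neg at hc
    rw [max_eq_right hc] at heq
    exact absurd heq hpos.ne'
  have heq2 : u q x = H x (nbrAvg G (hatFn u q) x) - f q x (u q x) := by
    rwa [max_eq_left ht.le] at heq
  have hf : 0 ≤ f q x (u q x) := by
    have h1 := hfmono q x hpos.le
    rwa [hf0] at h1
  have hHpos : 0 < H x (nbrAvg G (hatFn u q) x) := by linarith
  refine ⟨heq2, ?_⟩
  by_contra hc
  push_neg at hc
  have h2 := hHmono x hc
  rw [hH0] at h2
  linarith

lemma sol_disjoint {m : ℕ} {Bd : Set V} {H : V → ℝ → ℝ} {f : Fin m → V → ℝ → ℝ}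
    {φ : Fin m → V → ℝ} {u : Fin m → V → ℝ} (hu : IsSol G Bd H f φ u)
    (hHmono : ∀ x : V, Monotone (H x)) (hH0 : ∀ x, H x 0 = 0)
    (hfmono : ∀ l x, Monotone (f l x)) (hf0 : ∀ l x, f l x 0 = 0)
    {q r : Fin m} (hqr : r ≠ q) {x : V} (hx : x ∉ Bd) (hq : 0 < u q x) :
    u r x = 0 := by
  by_contra hr0
  have hr : 0 < u r x := lt_of_le_of_ne (hu.1 r x) (Ne.symm hr0)
  obtain ⟨_, hAq⟩ := sol_pos_interior G hu hHmono hH0 hfmono hf0 hx hq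
  obtain ⟨_, hAr⟩ := sol_pos_interior G hu hHmono hH0 hfmono hf0 hx hr
  have hsum : nbrAvg G (hatFn u q) x + nbrAvg G (hatFn u r) x ≤ 0 := by
    rw [← nbrAvg_add]
    exact nbrAvg_nonpos G (fun y => hat_add_nonpos u hu.1 hqr y) x
  linarith

lemma one_side {m : ℕ} {Bd : Set V} {H : V → ℝ → ℝ} {f : Fin m → V → ℝ → ℝ}
    {φ : Fin m → V → ℝ}
    (hconn : G.Connected) (hBd : Bd.Nonempty)
    (hHmono : ∀ x : V, Monotone (H x)) (hH0 : ∀ x, H x 0 = 0)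
    (hHodd : ∀ x s, H x (-s) = -H x s)
    (hfmono : ∀ l x, Monotone (f l x)) (hf0 : ∀ l x, f l x 0 = 0)
    (hHlip : ∀ x s t, |H x s - H x t| ≤ |s - t|)
    (u v : Fin m → V → ℝ) (hu : IsSol G Bd H f φ u) (hv : IsSol G Bd H f φ v)
    (l : Fin m) (M : ℝ)
    (hM : IsGreatest {a : ℝ | ∃ x : V, u l x ≤ v l x ∧ a = hatFn u l x - hatFn v l x} M) :
    ∀ x : V, hatFn u l x - hatFn v l x ≤ M := by
  classical
  set w : V → ℝ := fun y => hatFn u l y - hatFn v l y with hw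
  obtain ⟨b0, hb0⟩ := hBd
  obtain ⟨xs, _, hxs⟩ := Finset.exists_max_image (Finset.univ : Finset V) w
    ⟨b0, Finset.mem_univ b0⟩
  set K := w xs with hK
  have hmax : ∀ y, w y ≤ K := fun y => hxs y (Finset.mem_univ y)
  -- key propagation step
  have key : ∀ c, w c = K → c ∉ Bd → v l c < u l c → ∀ y, G.Adj c y → w y = K := by
    intro c hc hcBd hvu y hadj
    have hul : 0 < u l c := lt_of_le_of_lt (hv.1 l c) hvu
    obtain ⟨hueq, _⟩ := sol_pos_interior G hu hHmono hH0 hfmono hf0 hcBd hul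
    have hfin : 0 ≤ f l c (u l c) := by
      have h1 := hfmono l c hul.le
      rwa [hf0] at h1
    have hsumu : ∑ p ∈ Finset.univ.erase l, u p c = 0 :=
      Finset.sum_eq_zero fun p hp =>
        sol_disjoint G hu hHmono hH0 hfmono hf0 (Finset.mem_erase.1 hp).1 hcBd hul
    have hhatu : hatFn u l c = u l c := by
      unfold hatFn; rw [hsumu, sub_zero]
    have hhatv_def : hatFn v l c = v l c - ∑ p ∈ Finset.univ.erase l, v p c := rfl
    have hsumvnn : 0 ≤ ∑ p ∈ Finset.univ.erase l, v p c :=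
      Finset.sum_nonneg fun p _ => hv.1 p c
    -- main estimate : w c ≤ H c a - H c b
    have hest : w c ≤ H c (nbrAvg G (hatFn u l) c) - H c (nbrAvg G (hatFn v l) c) := by
      rcases eq_or_lt_of_le (hv.1 l c) with hvl0 | hvl0
      · -- v l c = 0
        have hveqmax := hv.2.1 l c hcBd
        rw [nbrAvg_hat] at hveqmax
        have hHb : H c (nbrAvg G (hatFn v l) c) ≤ 0 := by
          have h1 : H c (nbrAvg G (hatFn v l) c) - f l c (v l c)
              ≤ max (H c (nbrAvg G (hatFn v l) c) - f l c (v l c)) 0 := le_max_left _ _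
          rw [← hveqmax] at h1
          rw [← hvl0, hf0] at h1
          linarith
        by_cases hex : ∃ q ∈ Finset.univ.erase l, 0 < v q c
        · obtain ⟨q, hqmem, hq⟩ := hex
          have hql : q ≠ l := (Finset.mem_erase.1 hqmem).1
          have hsum_eq : ∑ p ∈ Finset.univ.erase l, v p c = v q c :=
            Finset.sum_eq_single_of_mem q hqmem fun r _ hrq =>
              sol_disjoint G hv hHmono hH0 hfmono hf0 hrq hcBd hq
          obtain ⟨hvqeq, _⟩ := sol_pos_interior G hv hHmono hH0 hfmono hf0 hcBd hq
          have hfq : 0 ≤ f q c (v q c) := by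
            have h1 := hfmono q c hq.le
            rwa [hf0] at h1
          have hb_q : nbrAvg G (hatFn v q) c ≤ -nbrAvg G (hatFn v l) c := by
            have hmono := nbrAvg_mono G (g := hatFn v q) (h := fun y => -hatFn v l y)
              (fun y => by
                show hatFn v q y ≤ -hatFn v l y
                linarith [hat_add_nonpos v hv.1 hql y]) c
            rwa [nbrAvg_neg] at hmono
          have hH2 : H c (nbrAvg G (hatFn v q) c) ≤ H c (-nbrAvg G (hatFn v l) c) :=
            hHmono c hb_q
          rw [hHodd] at hH2
          simp only [hw]
          rw [hhatu, hhatv_def, hsum_eq, ← hvl0]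
          linarith
        · push_neg at hex
          have hsum0 : ∑ p ∈ Finset.univ.erase l, v p c = 0 :=
            Finset.sum_eq_zero fun p hp => le_antisymm (hex p hp) (hv.1 p c)
          simp only [hw]
          rw [hhatu, hhatv_def, hsum0, ← hvl0]
          linarith
      · -- 0 < v l c
        obtain ⟨hveq, _⟩ := sol_pos_interior G hv hHmono hH0 hfmono hf0 hcBd hvl0
        have hsumv : ∑ p ∈ Finset.univ.erase l, v p c = 0 :=
          Finset.sum_eq_zero fun p hp =>
            sol_disjoint G hv hHmono hH0 hfmono hf0 (Finset.mem_erase.1 hp).1 hcBd hvl0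
        have hhatv : hatFn v l c = v l c := by
          unfold hatFn; rw [hsumv, sub_zero]
        have hfm : f l c (v l c) ≤ f l c (u l c) := hfmono l c hvu.le
        simp only [hw]
        rw [hhatu, hhatv]
        linarith
    have hwpos : 0 < w c := by
      have h1 : hatFn v l c ≤ v l c := by rw [hhatv_def]; linarith
      simp only [hw]
      rw [hhatu]
      linarith
    have hab : nbrAvg G (hatFn v l) c < nbrAvg G (hatFn u l) c := by
      by_contra hc2
      push_neg at hc2
      have h2 := hHmono c hc2
      linarith
    have h2 : H c (nbrAvg G (hatFn u l) c) - H c (nbrAvg G (hatFn v l) c)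
        ≤ nbrAvg G (hatFn u l) c - nbrAvg G (hatFn v l) c := by
      have h3 := le_abs_self (H c (nbrAvg G (hatFn u l) c) - H c (nbrAvg G (hatFn v l) c))
      have hlip := hHlip c (nbrAvg G (hatFn u l) c) (nbrAvg G (hatFn v l) c)
      rw [abs_of_pos (sub_pos.2 hab)] at hlip
      linarith
    have havg : nbrAvg G (hatFn u l) c - nbrAvg G (hatFn v l) c = nbrAvg G w c := by
      rw [← nbrAvg_sub]
    have h4 : K ≤ nbrAvg G w c := by
      rw [← havg]; linarith [hc ▸ hest]
    have hdegpos : 0 < (G.degree c : ℝ) := by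
      have : 0 < G.degree c := by
        rw [← SimpleGraph.card_neighborFinset_eq_degree]
        exact Finset.card_pos.2 ⟨y, (SimpleGraph.mem_neighborFinset G c y).2 hadj⟩
      exact_mod_cast this
    have h5 : K * (G.degree c : ℝ) ≤ ∑ z ∈ G.neighborFinset c, w z := by
      have h6 : K ≤ (∑ z ∈ G.neighborFinset c, w z) / (G.degree c : ℝ) := h4
      exact (le_div_iff₀ hdegpos).1 h6
    have h7 : ∑ z ∈ G.neighborFinset c, (K - w z) ≤ 0 := by
      rw [Finset.sum_sub_distrib, Finset.sum_const, nsmul_eq_mul]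
      have hcard : ((G.neighborFinset c).card : ℝ) = (G.degree c : ℝ) := by
        norm_cast
      rw [hcard]
      linarith [mul_comm K (G.degree c : ℝ)]
    have h8 : ∀ z ∈ G.neighborFinset c, K - w z = 0 := by
      have hnn : ∀ z ∈ G.neighborFinset c, 0 ≤ K - w z :=
        fun z _ => sub_nonneg.2 (hmax z)
      have heq0 : ∑ z ∈ G.neighborFinset c, (K - w z) = 0 :=
        le_antisymm h7 (Finset.sum_nonneg hnn)
      exact (Finset.sum_eq_zero_iff_of_nonneg hnn).1 heq0
    have h9 := h8 y ((SimpleGraph.mem_neighborFinset G c y).2 hadj)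
    linarith
  -- walk induction to find a max point with u l ≤ v l
  have walkind : ∀ (c d : V), G.Walk c d → d ∈ Bd → w c = K →
      ∃ x0, w x0 = K ∧ u l x0 ≤ v l x0 := by
    intro c d p
    induction p with
    | nil =>
      intro hd hc
      exact ⟨_, hc, le_of_eq (by rw [hu.2.2 l _ hd, hv.2.2 l _ hd])⟩
    | @cons c' y' d' hadj q ih =>
      intro hd hc
      by_cases hcBd : c' ∈ Bd
      · exact ⟨c', hc, le_of_eq (by rw [hu.2.2 l _ hcBd, hv.2.2 l _ hcBd])⟩
      · by_cases hvu : v l c' < u l c'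
        · exact ih hd (key c' hc hcBd hvu y' hadj)
        · push_neg at hvu
          exact ⟨c', hc, hvu⟩
  obtain ⟨p⟩ := hconn xs b0
  obtain ⟨x0, hx0K, hx0le⟩ := walkind xs b0 p hb0 rfl
  intro x
  have hx0M : w x0 ≤ M := hM.2 ⟨x0, hx0le, rfl⟩
  have := hmax x
  simp only [hw] at *
  linarith

end Aux

theorem two_sided_bound {V : Type*} {m : ℕ} [Fintype V] (G : SimpleGraph V) [DecidableRel G.Adj]
    (Bd : Set V) (H : V → ℝ → ℝ) (f : Fin m → V → ℝ → ℝ) (φ : Fin m → V → ℝ)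
    (hconn : G.Connected) (hBd : Bd.Nonempty)
    (hHmono : ∀ x : V, Monotone (H x)) (hH0 : ∀ x, H x 0 = 0)
    (hHodd : ∀ x s, H x (-s) = -H x s)
    (hfmono : ∀ l x, Monotone (f l x)) (hf0 : ∀ l x, f l x 0 = 0)
    (hfodd : ∀ l x s, f l x (-s) = -f l x s)
    (hφ : ∀ i j : Fin m, i ≠ j → ∀ x, φ i x * φ j x = 0)
    (hφnn : ∀ l x, 0 ≤ φ l x)
    (hHlip : ∀ x s t, |H x s - H x t| ≤ |s - t|)
    (u v : Fin m → V → ℝ) (hu : IsSol G Bd H f φ u) (hv : IsSol G Bd H f φ v) :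
    ∀ (l : Fin m) (M N : ℝ),
      IsGreatest {a : ℝ | ∃ x : V, u l x ≤ v l x ∧ a = hatFn u l x - hatFn v l x} M →
      IsGreatest {b : ℝ | ∃ x : V, v l x ≤ u l x ∧ b = hatFn v l x - hatFn u l x} N →
      ∀ x : V, -N ≤ hatFn u l x - hatFn v l x ∧ hatFn u l x - hatFn v l x ≤ M := by
  intro l M N hM hN x
  constructor
  · have h1 := one_side G hconn hBd hHmono hH0 hHodd hfmono hf0 hHlip v u hv hu l N hN x
    linarith
  · exact one_side G hconn hBd hHmono hH0 hHodd hfmono hf0 hHlip u v hu hv l M hM x
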